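/- Consider the stochastic iterate θ_{k+1} = θ_k − β·v_k in ℝ^d, where E[v_k | θ_k] = μ_h·∇F(θ_k) and E[‖v_k‖² | θ_k] = μ_h²‖∇F(θ_k)‖² + σ̃_k with σ̃_k ≥ 0, and F is μ-strongly convex with L-Lipschitz gradient and minimizer θ*. If 0 < β ≤ 2/(μ_h(μ+L)), then E[‖θ_{k+1} − θ*‖²] ≤ (1 − 2βμ_h μL/(μ+L))·E[‖θ_k − θ*‖²] + β²·E[σ̃_k]. -/

import Mathlib

/-!
Write `X = θₖ - θ*` and `G = ∇F(θₖ)`. Since `X` is `σ(θₖ)`-measurable, the tower property lets us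
replace `vₖ` by its conditional mean `μₕ G` in the cross term of `‖X - β vₖ‖²`, so
`E‖X - β vₖ‖² = E‖X - β μₕ G‖² + β² (E‖vₖ‖² - E‖μₕ G‖²) = E‖X - β μₕ G‖² + β² E σ̃ₖ`.
The noiseless step contracts pointwise: co-coercivity of the gradient of the convex, `(L - μ)`-smooth
function `F - μ/2 ‖·‖²` gives `μ L ‖X‖² + ‖G‖² ≤ (μ + L) ⟪X, G⟫`, and with `β μₕ (μ + L) ≤ 2` this
yields `‖X - β μₕ G‖² ≤ (1 - 2 β μₕ μ L / (μ + L)) ‖X‖²`.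
-/

open MeasureTheory ProbabilityTheory
open scoped RealInnerProductSpace

section Deterministic

variable {E : Type*} [NormedAddCommGroup E] [InnerProductSpace ℝ E]

theorem HasGradientAt.neg [CompleteSpace E] {f : E → ℝ} {f' x : E} (h : HasGradientAt f f' x) :
    HasGradientAt (fun y => -f y) (-f') x := by
  rw [hasGradientAt_iff_hasFDerivAt, map_neg]
  exact (hasGradientAt_iff_hasFDerivAt.mp h).neg

theorem HasGradientAt.hasDerivAt_comp_add_smul [CompleteSpace E] {f : E → ℝ} {f' x e : E} {t : ℝ}
    (h : HasGradientAt f f' (x + t • e)) :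
    HasDerivAt (fun s : ℝ => f (x + s • e)) ⟪f', e⟫ t := by
  have hline : HasDerivAt (fun s : ℝ => x + s • e) e t := by
    simpa using ((hasDerivAt_id t).smul_const e).const_add x
  exact (hasGradientAt_iff_hasFDerivAt.mp h).comp_hasDerivAt t hline

theorem quadratic_upper_bound_of_inner_sub_le [CompleteSpace E] {F : E → ℝ} {F' : E → E} {c : ℝ}
    (hF : ∀ x, HasGradientAt F (F' x) x) (hc : ∀ x y, ⟪F' x - F' y, x - y⟫ ≤ c * ‖x - y‖ ^ 2)
    (x y : E) : F y ≤ F x + ⟪F' x, y - x⟫ + c / 2 * ‖y - x‖ ^ 2 := by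
  set e := y - x
  let h : ℝ → ℝ := fun t => F (x + t • e) - t * ⟪F' x, e⟫ - c / 2 * t ^ 2 * ‖e‖ ^ 2
  have hder : ∀ t, HasDerivAt h (⟪F' (x + t • e) - F' x, e⟫ - c * t * ‖e‖ ^ 2) t := by
    intro t
    have hlin := (hasDerivAt_id t).mul_const ⟪F' x, e⟫
    have hquad := ((hasDerivAt_pow 2 t).const_mul (c / 2)).mul_const (‖e‖ ^ 2)
    refine (((hF _).hasDerivAt_comp_add_smul.sub hlin).sub hquad).congr_deriv ?_
    simp only [inner_sub_left, Nat.cast_ofNat]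
    ring
  have hanti : AntitoneOn h (Set.Icc 0 1) := by
    refine antitoneOn_of_hasDerivWithinAt_nonpos (convex_Icc 0 1)
      (fun t _ => (hder t).continuousAt.continuousWithinAt) (fun t _ => (hder t).hasDerivWithinAt)
      fun t ht => ?_
    rw [interior_Icc] at ht
    have hstep := hc (x + t • e) x
    rw [add_sub_cancel_left, inner_smul_right, norm_smul, Real.norm_of_nonneg ht.1.le] at hstep
    have : ⟪F' (x + t • e) - F' x, e⟫ ≤ c * t * ‖e‖ ^ 2 := by
      refine le_of_mul_le_mul_left ?_ ht.1
      linarith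
    linarith
  have h10 : h 1 ≤ h 0 := hanti (by simp) (by simp) zero_le_one
  have hxe : x + e = y := add_sub_cancel x y
  simp only [h, one_smul, zero_smul, add_zero, hxe, one_mul, one_pow, zero_mul,
    sub_zero, ne_eq, OfNat.ofNat_ne_zero, not_false_eq_true, zero_pow, mul_zero] at h10
  linarith

theorem quadratic_lower_bound_of_le_inner_sub [CompleteSpace E] {F : E → ℝ} {F' : E → E} {c : ℝ}
    (hF : ∀ x, HasGradientAt F (F' x) x) (hc : ∀ x y, c * ‖x - y‖ ^ 2 ≤ ⟪F' x - F' y, x - y⟫)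
    (x y : E) : F x + ⟪F' x, y - x⟫ + c / 2 * ‖y - x‖ ^ 2 ≤ F y := by
  have := quadratic_upper_bound_of_inner_sub_le (c := -c) (fun x => (hF x).neg)
    (fun x y => by rw [← neg_sub', inner_neg_left]; linarith [hc x y]) x y
  rw [inner_neg_left] at this
  linarith

theorem inv_mul_norm_sub_sq_le_inner_sub_of_quadratic_sandwich {φ : E → ℝ} {G : E → E} {M : ℝ}
    (hM : 0 < M) (hlow : ∀ a b, φ a + ⟪G a, b - a⟫ ≤ φ b)
    (hup : ∀ a b, φ b ≤ φ a + ⟪G a, b - a⟫ + M / 2 * ‖b - a‖ ^ 2) (x y : E) :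
    M⁻¹ * ‖G x - G y‖ ^ 2 ≤ ⟪G x - G y, x - y⟫ := by
  -- Evaluate both bounds at the gradient step `z = a - M⁻¹ • (G a - G b)`.
  have hbregman : ∀ a b, (2 * M)⁻¹ * ‖G a - G b‖ ^ 2 ≤ φ a - φ b - ⟪G b, a - b⟫ := by
    intro a b
    set g := G a - G b
    have hz : a - M⁻¹ • g - a = -(M⁻¹ • g) := by abel
    have h1 := hlow b (a - M⁻¹ • g)
    have h2 := hup a (a - M⁻¹ • g)
    rw [hz, norm_neg, norm_smul, Real.norm_of_nonneg (inv_nonneg.mpr hM.le), inner_neg_right,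
      inner_smul_right] at h2
    rw [show a - M⁻¹ • g - b = (a - b) - M⁻¹ • g by abel, inner_sub_right, inner_smul_right] at h1
    have hg : M⁻¹ * ⟪G a, g⟫ - M⁻¹ * ⟪G b, g⟫ = M⁻¹ * ‖g‖ ^ 2 := by
      rw [← mul_sub, ← inner_sub_left, real_inner_self_eq_norm_sq]
    have hM' : M / 2 * (M⁻¹ * ‖g‖) ^ 2 = (2 * M)⁻¹ * ‖g‖ ^ 2 := by
      field_simp
    have hM'' : M⁻¹ * ‖g‖ ^ 2 = 2 * ((2 * M)⁻¹ * ‖g‖ ^ 2) := by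
      field_simp
    linarith
  have hxy := hbregman x y
  have hyx := hbregman y x
  rw [norm_sub_rev (G y)] at hyx
  have hsum : ⟪G y, x - y⟫ + ⟪G x, y - x⟫ = -⟪G x - G y, x - y⟫ := by
    rw [inner_sub_left, ← neg_sub x y, inner_neg_right]
    ring
  have hM' : M⁻¹ = 2 * (2 * M)⁻¹ := by
    field_simp
  rw [hM']
  linarith

theorem inner_sub_lower_bound_of_quadratic_sandwich {φ : E → ℝ} {G : E → E} {μ L : ℝ}
    (hμL : μ < L) (hlow : ∀ a b, φ a + ⟪G a, b - a⟫ + μ / 2 * ‖b - a‖ ^ 2 ≤ φ b)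
    (hup : ∀ a b, φ b ≤ φ a + ⟪G a, b - a⟫ + L / 2 * ‖b - a‖ ^ 2) (x y : E) :
    μ * L * ‖x - y‖ ^ 2 + ‖G x - G y‖ ^ 2 ≤ (μ + L) * ⟪G x - G y, x - y⟫ := by
  -- Removing `μ / 2 * ‖·‖ ^ 2` leaves a convex function with `(L - μ)`-smooth gradient.
  have hnorm : ∀ a b : E, ‖b‖ ^ 2 = ‖a‖ ^ 2 + 2 * ⟪a, b - a⟫ + ‖b - a‖ ^ 2 := fun a b => by
    simpa using norm_add_sq_real a (b - a)
  have hshift : ∀ a b : E, ⟪G a - μ • a, b - a⟫ = ⟪G a, b - a⟫ - μ * ⟪a, b - a⟫ := fun a b => by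
    rw [inner_sub_left, real_inner_smul_left]
  have hco := inv_mul_norm_sub_sq_le_inner_sub_of_quadratic_sandwich (sub_pos.mpr hμL)
    (φ := fun a => φ a - μ / 2 * ‖a‖ ^ 2) (G := fun a => G a - μ • a)
    (fun a b => by rw [hshift]; linear_combination hlow a b + μ / 2 * hnorm a b)
    (fun a b => by rw [hshift]; linear_combination hup a b - μ / 2 * hnorm a b) x y
  have hdiff : G x - μ • x - (G y - μ • y) = (G x - G y) - μ • (x - y) := by
    rw [smul_sub]; abel
  set g := G x - G y
  set d := x - y
  have hnorm_diff : ‖g - μ • d‖ ^ 2 = ‖g‖ ^ 2 - 2 * μ * ⟪g, d⟫ + μ ^ 2 * ‖d‖ ^ 2 := by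
    rw [norm_sub_sq_real, inner_smul_right, norm_smul, mul_pow, Real.norm_eq_abs, sq_abs]
    ring
  have hinner_diff : ⟪g - μ • d, d⟫ = ⟪g, d⟫ - μ * ‖d‖ ^ 2 := by
    rw [inner_sub_left, real_inner_smul_left, real_inner_self_eq_norm_sq]
  rw [hdiff, hnorm_diff, hinner_diff, inv_mul_le_iff₀ (sub_pos.mpr hμL)] at hco
  linear_combination hco

theorem inner_gradient_sub_lower_bound [CompleteSpace E] {F : E → ℝ} {F' : E → E} {μ L : ℝ}
    (hμL : 0 ≤ μ + L) (hF : ∀ x, HasGradientAt F (F' x) x)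
    (hstrong : ∀ x y, ⟪F' x - F' y, x - y⟫ ≥ μ * ‖x - y‖ ^ 2)
    (hlip : ∀ x y, ‖F' x - F' y‖ ≤ L * ‖x - y‖) (x y : E) :
    μ * L * ‖x - y‖ ^ 2 + ‖F' x - F' y‖ ^ 2 ≤ (μ + L) * ⟪F' x - F' y, x - y⟫ := by
  rcases lt_or_ge μ L with hlt | hge
  · refine inner_sub_lower_bound_of_quadratic_sandwich hlt
      (quadratic_lower_bound_of_le_inner_sub hF hstrong)
      (quadratic_upper_bound_of_inner_sub_le hF fun a b => ?_) x y
    calc ⟪F' a - F' b, a - b⟫ ≤ ‖F' a - F' b‖ * ‖a - b‖ := real_inner_le_norm _ _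
      _ ≤ L * ‖a - b‖ * ‖a - b‖ := by gcongr; exact hlip a b
      _ = L * ‖a - b‖ ^ 2 := by ring
  · have hsq : ‖F' x - F' y‖ ^ 2 ≤ (μ * ‖x - y‖) ^ 2 := by
      gcongr
      exact (hlip x y).trans (by gcongr)
    nlinarith [mul_le_mul_of_nonneg_left (hstrong x y) hμL]

theorem norm_sub_smul_sq_le_of_inner_lower_bound {x g : E} {μ L c : ℝ} (hμL : 0 < μ + L)
    (hkey : μ * L * ‖x‖ ^ 2 + ‖g‖ ^ 2 ≤ (μ + L) * ⟪x, g⟫) (hc0 : 0 ≤ c) (hc : c ≤ 2 / (μ + L)) :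
    ‖x - c • g‖ ^ 2 ≤ (1 - 2 * c * μ * L / (μ + L)) * ‖x‖ ^ 2 := by
  rw [le_div_iff₀ hμL] at hc
  rw [norm_sub_sq_real, inner_smul_right, norm_smul, Real.norm_of_nonneg hc0,
    ← mul_le_mul_iff_of_pos_left hμL]
  have hfrac : (μ + L) * (1 - 2 * c * μ * L / (μ + L)) = μ + L - 2 * c * μ * L := by
    field_simp
  rw [← mul_assoc (μ + L), hfrac]
  nlinarith [mul_le_mul_of_nonneg_left hkey hc0,
    mul_le_mul_of_nonneg_left hc (mul_nonneg hc0 (sq_nonneg ‖g‖))]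

theorem norm_sub_sub_smul_gradient_sq_le [CompleteSpace E] {F : E → ℝ} {F' : E → E}
    {μ L c : ℝ} (hμL : 0 < μ + L) (hF : ∀ x, HasGradientAt F (F' x) x)
    (hstrong : ∀ x y, ⟪F' x - F' y, x - y⟫ ≥ μ * ‖x - y‖ ^ 2)
    (hlip : ∀ x y, ‖F' x - F' y‖ ≤ L * ‖x - y‖) {x₀ : E} (hx₀ : F' x₀ = 0) (hc0 : 0 ≤ c)
    (hc : c ≤ 2 / (μ + L)) (x : E) :
    ‖x - x₀ - c • F' x‖ ^ 2 ≤ (1 - 2 * c * μ * L / (μ + L)) * ‖x - x₀‖ ^ 2 := by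
  have hkey := inner_gradient_sub_lower_bound hμL.le hF hstrong hlip x x₀
  rw [hx₀, sub_zero, real_inner_comm] at hkey
  exact norm_sub_smul_sq_le_of_inner_lower_bound hμL hkey hc0 hc

end Deterministic

section Probabilistic

variable {Ω E : Type*} {m m0 : MeasurableSpace Ω} {P : Measure Ω}
  [NormedAddCommGroup E] [InnerProductSpace ℝ E]

theorem MeasureTheory.MemLp.integrable_inner {X Y : Ω → E} (hX : MemLp X 2 P) (hY : MemLp Y 2 P) :
    Integrable (fun ω => ⟪X ω, Y ω⟫) P :=
  (L2.integrable_inner (𝕜 := ℝ) (hX.toLp X) (hY.toLp Y)).congr <| by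
    filter_upwards [hX.coeFn_toLp, hY.coeFn_toLp] with ω hXω hYω
    rw [hXω, hYω]

theorem integral_inner_condExp_right [CompleteSpace E] [IsFiniteMeasure P] (hm : m ≤ m0)
    {X Y : Ω → E} (hX : StronglyMeasurable[m] X) (hXY : Integrable (fun ω => ⟪X ω, Y ω⟫) P)
    (hY : Integrable Y P) :
    ∫ ω, ⟪X ω, Y ω⟫ ∂P = ∫ ω, ⟪X ω, (P[Y | m]) ω⟫ ∂P := by
  rw [← integral_condExp hm]
  exact integral_congr_ae (condExp_bilin_of_stronglyMeasurable_left (innerSL ℝ) hX hXY hY)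

theorem integral_norm_sub_smul_sq [CompleteSpace E] [IsFiniteMeasure P] (hm : m ≤ m0)
    {X Y W : Ω → E} (β : ℝ) (hXm : StronglyMeasurable[m] X) (hX : MemLp X 2 P)
    (hY : MemLp Y 2 P) (hW : MemLp W 2 P) (hYW : P[Y | m] =ᵐ[P] W) :
    ∫ ω, ‖X ω - β • Y ω‖ ^ 2 ∂P
      = ∫ ω, ‖X ω - β • W ω‖ ^ 2 ∂P
        + β ^ 2 * (∫ ω, ‖Y ω‖ ^ 2 ∂P - ∫ ω, ‖W ω‖ ^ 2 ∂P) := by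
  have hexpand : ∀ V : Ω → E, MemLp V 2 P → ∫ ω, ‖X ω - β • V ω‖ ^ 2 ∂P
      = ∫ ω, ‖X ω‖ ^ 2 ∂P - 2 * β * ∫ ω, ⟪X ω, V ω⟫ ∂P + β ^ 2 * ∫ ω, ‖V ω‖ ^ 2 ∂P := by
    intro V hV
    have hpt : ∀ ω, ‖X ω - β • V ω‖ ^ 2 = ‖X ω‖ ^ 2 - 2 * β * ⟪X ω, V ω⟫ + β ^ 2 * ‖V ω‖ ^ 2 :=
      fun ω => by
        rw [norm_sub_sq_real, inner_smul_right, norm_smul, mul_pow, Real.norm_eq_abs, sq_abs]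
        ring
    have hcross : Integrable (fun ω => 2 * β * ⟪X ω, V ω⟫) P := (hX.integrable_inner hV).const_mul _
    have hdiff : Integrable (fun ω => ‖X ω‖ ^ 2 - 2 * β * ⟪X ω, V ω⟫) P :=
      hX.norm.integrable_sq.sub hcross
    simp_rw [hpt]
    rw [integral_add hdiff (hV.norm.integrable_sq.const_mul _),
      integral_sub hX.norm.integrable_sq hcross, integral_const_mul, integral_const_mul]
  have hinner : ∫ ω, ⟪X ω, Y ω⟫ ∂P = ∫ ω, ⟪X ω, W ω⟫ ∂P := by
    rw [integral_inner_condExp_right hm hXm (hX.integrable_inner hY) (hY.integrable one_le_two)]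
    exact integral_congr_ae (by filter_upwards [hYW] with ω hω; rw [hω])
  rw [hexpand Y hY, hexpand W hW, hinner]
  ring

end Probabilistic

theorem stmt11_general {Ω : Type*} [MeasureSpace Ω] [IsProbabilityMeasure (ℙ : Measure Ω)]
    {d : ℕ} (F : EuclideanSpace ℝ (Fin d) → ℝ)
    (F' : EuclideanSpace ℝ (Fin d) → EuclideanSpace ℝ (Fin d))
    (μ L μh β : ℝ) (hμ : 0 < μ) (hL : 0 < L) (hμh : 0 < μh)
    (hF : ∀ x, HasGradientAt F (F' x) x)
    (hstrong : ∀ x y, ⟪F' x - F' y, x - y⟫ ≥ μ * ‖x - y‖ ^ 2)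
    (hlip : ∀ x y, ‖F' x - F' y‖ ≤ L * ‖x - y‖)
    (θstar : EuclideanSpace ℝ (Fin d))
    (hgrad0 : F' θstar = 0)
    (θk vk : Ω → EuclideanSpace ℝ (Fin d)) (σtilde : Ω → ℝ)
    (hθmeas : Measurable θk)
    (hθL2 : MemLp θk 2 (ℙ : Measure Ω)) (hvL2 : MemLp vk 2 (ℙ : Measure Ω))
    (hσint : Integrable σtilde (ℙ : Measure Ω))
    -- conditional mean of v_k given θ_k:
    (hcondmean : (ℙ : Measure Ω)[vk | MeasurableSpace.comap θk inferInstance]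
        =ᵐ[(ℙ : Measure Ω)] fun ω => μh • F' (θk ω))
    -- conditional second moment of v_k given θ_k:
    (hcondsq : (ℙ : Measure Ω)[(fun ω => ‖vk ω‖ ^ 2) | MeasurableSpace.comap θk inferInstance]
        =ᵐ[(ℙ : Measure Ω)] fun ω => μh ^ 2 * ‖F' (θk ω)‖ ^ 2 + σtilde ω)
    (hβ0 : 0 < β) (hβ : β ≤ 2 / (μh * (μ + L))) :
    ∫ ω, ‖(θk ω - β • vk ω) - θstar‖ ^ 2 ∂(ℙ : Measure Ω)
      ≤ (1 - 2 * β * μh * μ * L / (μ + L)) * ∫ ω, ‖θk ω - θstar‖ ^ 2 ∂(ℙ : Measure Ω)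
        + β ^ 2 * ∫ ω, σtilde ω ∂(ℙ : Measure Ω) := by
  have hm : MeasurableSpace.comap θk inferInstance ≤ _ := hθmeas.comap_le
  have hμL : 0 < μ + L := add_pos hμ hL
  have hXm : StronglyMeasurable[MeasurableSpace.comap θk inferInstance] (θk · - θstar) :=
    ((comap_measurable θk).sub_const θstar).stronglyMeasurable
  have hX : MemLp (θk · - θstar) 2 ℙ := hθL2.sub (memLp_const θstar)
  have hG : MemLp (fun ω => μh • F' (θk ω)) 2 ℙ := by
    have hcont : Continuous F' := (LipschitzWith.of_dist_le_mul (K := L.toNNReal) fun a b => by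
      simpa [dist_eq_norm, Real.coe_toNNReal L hL.le] using hlip a b).continuous
    refine (hX.of_le_mul (c := L) (hcont.comp_aestronglyMeasurable hθL2.1)
      (.of_forall fun ω => ?_)).const_smul μh
    simpa [hgrad0] using hlip (θk ω) θstar
  have hnoise : ∫ ω, ‖vk ω‖ ^ 2 ∂ℙ - ∫ ω, ‖μh • F' (θk ω)‖ ^ 2 ∂ℙ = ∫ ω, σtilde ω ∂ℙ := by
    have hsq : ∀ ω, ‖μh • F' (θk ω)‖ ^ 2 = μh ^ 2 * ‖F' (θk ω)‖ ^ 2 := fun ω => by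
      rw [norm_smul, mul_pow, Real.norm_eq_abs, sq_abs]
    have hGsq := hG.norm.integrable_sq
    simp_rw [hsq] at hGsq ⊢
    rw [← integral_condExp hm (f := fun ω => ‖vk ω‖ ^ 2), integral_congr_ae hcondsq,
      integral_add hGsq hσint]
    ring
  have hc : β * μh ≤ 2 / (μ + L) := by
    rwa [le_div_iff₀ hμL, mul_assoc, ← le_div_iff₀ (by positivity)]
  have hcontract : ∫ ω, ‖θk ω - θstar - β • μh • F' (θk ω)‖ ^ 2 ∂ℙ
      ≤ (1 - 2 * β * μh * μ * L / (μ + L)) * ∫ ω, ‖θk ω - θstar‖ ^ 2 ∂ℙ := by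
    rw [← integral_const_mul]
    refine integral_mono (hX.sub (hG.const_smul β)).norm.integrable_sq
      (hX.norm.integrable_sq.const_mul _) fun ω => ?_
    rw [smul_smul, show 2 * β * μh = 2 * (β * μh) by ring]
    exact norm_sub_sub_smul_gradient_sq_le hμL hF hstrong hlip hgrad0 (by positivity) hc (θk ω)
  simp_rw [sub_right_comm _ _ θstar]
  rw [integral_norm_sub_smul_sq hm β hXm hX hvL2 hG hcondmean, hnoise]
  linarith

theorem stmt11 {Ω : Type*} [MeasureSpace Ω] [IsProbabilityMeasure (ℙ : Measure Ω)]
    {d : ℕ} (F : EuclideanSpace ℝ (Fin d) → ℝ)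
    (F' : EuclideanSpace ℝ (Fin d) → EuclideanSpace ℝ (Fin d))
    (μ L μh β : ℝ) (hμ : 0 < μ) (hL : 0 < L) (hμh : 0 < μh)
    (hF : ∀ x, HasGradientAt F (F' x) x)
    (hstrong : ∀ x y, ⟪F' x - F' y, x - y⟫ ≥ μ * ‖x - y‖ ^ 2)
    (hlip : ∀ x y, ‖F' x - F' y‖ ≤ L * ‖x - y‖)
    (θstar : EuclideanSpace ℝ (Fin d))
    (hgrad0 : F' θstar = 0)
    (hmin : ∀ θ, F θstar ≤ F θ)
    (θk vk : Ω → EuclideanSpace ℝ (Fin d)) (σtilde : Ω → ℝ)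
    (hθmeas : Measurable θk) (hvmeas : Measurable vk)
    (hθL2 : MemLp θk 2 (ℙ : Measure Ω)) (hvL2 : MemLp vk 2 (ℙ : Measure Ω))
    (hσ0 : ∀ ω, 0 ≤ σtilde ω)
    (hσint : Integrable σtilde (ℙ : Measure Ω))
    -- conditional mean of v_k given θ_k:
    (hcondmean : (ℙ : Measure Ω)[vk | MeasurableSpace.comap θk inferInstance]
        =ᵐ[(ℙ : Measure Ω)] fun ω => μh • F' (θk ω))
    -- conditional second moment of v_k given θ_k:
    (hcondsq : (ℙ : Measure Ω)[(fun ω => ‖vk ω‖ ^ 2) | MeasurableSpace.comap θk inferInstance]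
        =ᵐ[(ℙ : Measure Ω)] fun ω => μh ^ 2 * ‖F' (θk ω)‖ ^ 2 + σtilde ω)
    (hβ0 : 0 < β) (hβ : β ≤ 2 / (μh * (μ + L))) :
    ∫ ω, ‖(θk ω - β • vk ω) - θstar‖ ^ 2 ∂(ℙ : Measure Ω)
      ≤ (1 - 2 * β * μh * μ * L / (μ + L)) * ∫ ω, ‖θk ω - θstar‖ ^ 2 ∂(ℙ : Measure Ω)
        + β ^ 2 * ∫ ω, σtilde ω ∂(ℙ : Measure Ω) :=
  stmt11_general F F' μ L μh β hμ hL hμh hF hstrong hlip θstar hgrad0 θk vk σtilde hθmeas hθL2 hvL2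
    hσint hcondmean hcondsq hβ0 hβ
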